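/- Let Y = (Y₁, Y₂) be a standard Gaussian vector in ℝ² (mean 0, covariance I₂), and let K = {y ∈ ℝ² : y₂ = 0} ∪ {y ∈ ℝ² : y₁ = 0} be the union of the two coordinate axes, with metric projection pr(y₁, y₂) = (y₁·1{|y₁| > |y₂|}, y₂·1{|y₂| > |y₁|}) (defined for |y₁| ≠ |y₂|). Then the degrees of freedom df = Σᵢ cov(Yᵢ, prᵢ(Y)) = E(max{Y₁², Y₂²}) = 1 + 2/π, while the Stein degrees of freedom df_S = E(∇·pr(Y)) = 1; thus df − df_S = 2/π > 0. -/

import Mathlib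

/-! Off the null set `|y₀| = |y₁|`, `pr` is locally the linear projection onto one coordinate
axis: its divergence is `1`, so `df_S = 1`, and `⟨pr y, y⟩ = max (y₀², y₁²)`. The rotation by
`π/4` preserves the standard Gaussian and turns `max (y₀², y₁²)` into
`(y₀² + y₁²)/2 + |y₀| |y₁|`; as the density is a product of two one-dimensional standard normal
densities, the expectation of the latter is `1 + (E|Y₀|)² = 1 + 2/π`. -/

open MeasureTheory

/-- The standard Gaussian density on `ℝ²`. -/
noncomputable def stdGauss2 (y : EuclideanSpace ℝ (Fin 2)) : ℝ :=
  (2 * Real.pi)⁻¹ * Real.exp (-‖y‖ ^ 2 / 2)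

open ProbabilityTheory Real Filter Topology

local notation "ℝ²" => EuclideanSpace ℝ (Fin 2)

lemma integral_abs_mul_exp_neg_mul_sq {b : ℝ} (hb : 0 < b) :
    ∫ t : ℝ, |t| * exp (-b * t ^ 2) = b⁻¹ := by
  have hIoi := integral_rpow_mul_exp_neg_mul_rpow (p := 2) (q := 1) two_pos (by norm_num) hb
  norm_num [rpow_neg_one] at hIoi
  have hsymm := integral_comp_abs (f := fun t => t * exp (-(b * t ^ 2)))
  simp only [sq_abs] at hsymm
  simp only [neg_mul]
  rw [hsymm, hIoi]
  ring

lemma integral_abs_mul_gaussianPDFReal {v : NNReal} (hv : v ≠ 0) :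
    ∫ t, |t| * gaussianPDFReal 0 v t = √(2 * v / π) := by
  calc ∫ t, |t| * gaussianPDFReal 0 v t
        = (√(2 * π * v))⁻¹ * ∫ t, |t| * exp (-(2 * (v : ℝ))⁻¹ * t ^ 2) := by
          rw [← integral_const_mul]
          congr 1 with t
          simp only [gaussianPDFReal_def, sub_zero]
          ring_nf
    _ = (√(2 * π * v))⁻¹ * (2 * v) := by
          rw [integral_abs_mul_exp_neg_mul_sq (by positivity), inv_inv]
    _ = √(2 * v / π) := by
          rw [show 2 * v / π = (2 * v) ^ 2 / (2 * π * v) by field_simp,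
            sqrt_div' _ (by positivity), sqrt_sq (by positivity)]
          ring

lemma integral_sq_mul_gaussianPDFReal {v : NNReal} (hv : v ≠ 0) :
    ∫ t, t ^ 2 * gaussianPDFReal 0 v t = v := by
  calc ∫ t, t ^ 2 * gaussianPDFReal 0 v t = ∫ t, t ^ 2 ∂gaussianReal 0 v := by
        rw [integral_gaussianReal_eq_integral_smul hv]
        simp_rw [smul_eq_mul, mul_comm]
    _ = v := by
        rw [← variance_of_integral_eq_zero measurable_id'.aemeasurable integral_id_gaussianReal,
          variance_fun_id_gaussianReal]

lemma integrable_abs_mul_gaussianPDFReal {v : NNReal} (hv : v ≠ 0) :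
    Integrable fun t => |t| * gaussianPDFReal 0 v t :=
  .of_integral_ne_zero <| by
    rw [integral_abs_mul_gaussianPDFReal hv]
    exact (sqrt_pos.2 (by positivity)).ne'

lemma integrable_sq_mul_gaussianPDFReal {v : NNReal} (hv : v ≠ 0) :
    Integrable fun t => t ^ 2 * gaussianPDFReal 0 v t :=
  .of_integral_ne_zero <| by
    rw [integral_sq_mul_gaussianPDFReal hv]
    exact_mod_cast hv

lemma measurePreserving_ofLp_finTwoArrow :
    MeasurePreserving ((MeasurableEquiv.toLp 2 (Fin 2 → ℝ)).symm.trans MeasurableEquiv.finTwoArrow)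
      (volume : Measure ℝ²) (volume : Measure (ℝ × ℝ)) :=
  (volume_preserving_finTwoArrow ℝ).comp (PiLp.volume_preserving_ofLp _)

lemma integral_comp_apply_zero_apply_one (F : ℝ × ℝ → ℝ) :
    ∫ y : ℝ², F (y 0, y 1) = ∫ p, F p :=
  measurePreserving_ofLp_finTwoArrow.integral_comp' F

lemma integrable_comp_apply_zero_apply_one_iff {F : ℝ × ℝ → ℝ} :
    Integrable (fun y : ℝ² => F (y 0, y 1)) ↔ Integrable F :=
  measurePreserving_ofLp_finTwoArrow.integrable_comp_emb (MeasurableEquiv.measurableEmbedding _)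

lemma stdGauss2_eq_mul (y : ℝ²) :
    stdGauss2 y = gaussianPDFReal 0 1 (y 0) * gaussianPDFReal 0 1 (y 1) := by
  simp only [stdGauss2, gaussianPDFReal_def, EuclideanSpace.norm_sq_eq, Fin.sum_univ_two,
    Real.norm_eq_abs, sq_abs, NNReal.coe_one, mul_one, sub_zero]
  rw [mul_mul_mul_comm, ← exp_add, ← mul_inv, mul_self_sqrt (by positivity)]
  ring_nf

lemma integrable_mul_stdGauss2 {f g : ℝ → ℝ}
    (hf : Integrable fun t => f t * gaussianPDFReal 0 1 t)
    (hg : Integrable fun t => g t * gaussianPDFReal 0 1 t) :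
    Integrable fun y : ℝ² => f (y 0) * g (y 1) * stdGauss2 y := by
  refine (integrable_comp_apply_zero_apply_one_iff.2
    (Measure.volume_eq_prod ℝ ℝ ▸ hf.mul_prod hg)).congr (.of_forall fun y => ?_)
  simp only [stdGauss2_eq_mul]
  ring

lemma integral_mul_stdGauss2 (f g : ℝ → ℝ) :
    ∫ y : ℝ², f (y 0) * g (y 1) * stdGauss2 y =
      (∫ t, f t * gaussianPDFReal 0 1 t) * ∫ t, g t * gaussianPDFReal 0 1 t := by
  rw [← integral_prod_mul, ← Measure.volume_eq_prod, ← integral_comp_apply_zero_apply_one]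
  simp only [stdGauss2_eq_mul]
  congr 1 with y
  ring

lemma integral_stdGauss2 : ∫ y, stdGauss2 y = 1 := by
  simpa [integral_gaussianPDFReal_eq_one] using integral_mul_stdGauss2 1 1

lemma integral_apply_mul_stdGauss2 (i : Fin 2) (f : ℝ → ℝ) :
    ∫ y : ℝ², f (y i) * stdGauss2 y = ∫ t, f t * gaussianPDFReal 0 1 t := by
  fin_cases i
  · simpa [integral_gaussianPDFReal_eq_one] using integral_mul_stdGauss2 f 1
  · simpa [integral_gaussianPDFReal_eq_one] using integral_mul_stdGauss2 1 f

lemma integrable_apply_mul_stdGauss2 (i : Fin 2) {f : ℝ → ℝ}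
    (hf : Integrable fun t => f t * gaussianPDFReal 0 1 t) :
    Integrable fun y : ℝ² => f (y i) * stdGauss2 y := by
  have h1 : Integrable fun t => (1 : ℝ → ℝ) t * gaussianPDFReal 0 1 t := by
    simpa using integrable_gaussianPDFReal 0 1
  fin_cases i
  · simpa using integrable_mul_stdGauss2 hf h1
  · simpa using integrable_mul_stdGauss2 h1 hf

lemma integral_comp_linearIsometryEquiv_mul_stdGauss2 (R : ℝ² ≃ₗᵢ[ℝ] ℝ²) (F : ℝ² → ℝ) :
    ∫ y, F (R y) * stdGauss2 y = ∫ y, F y * stdGauss2 y := by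
  have hR (y : ℝ²) : stdGauss2 (R y) = stdGauss2 y := by simp only [stdGauss2, R.norm_map]
  simpa only [hR] using
    R.measurePreserving.integral_comp R.toHomeomorph.measurableEmbedding fun y => F y * stdGauss2 y

noncomputable def rotQuarterPi : ℝ² ≃ₗᵢ[ℝ] ℝ² :=
  Complex.orthonormalBasisOneI.repr.symm.trans
    ((rotation (Circle.exp (π / 4))).trans Complex.orthonormalBasisOneI.repr)

lemma rotQuarterPi_apply (y : ℝ²) :
    rotQuarterPi y 0 = √2 / 2 * (y 0 - y 1) ∧ rotQuarterPi y 1 = √2 / 2 * (y 0 + y 1) := by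
  simp only [rotQuarterPi, LinearIsometryEquiv.trans_apply, rotation_apply, Circle.coe_exp,
    Complex.orthonormalBasisOneI_repr_symm_apply, Complex.orthonormalBasisOneI_repr_apply,
    Complex.mul_re, Complex.mul_im, Complex.add_re, Complex.add_im, Complex.ofReal_re,
    Complex.ofReal_im, Complex.I_re, Complex.I_im, Complex.exp_ofReal_mul_I_re,
    Complex.exp_ofReal_mul_I_im, cos_pi_div_four, sin_pi_div_four]
  constructor <;> simp <;> ring

lemma max_sq_rotQuarterPi (a b : ℝ) :
    max ((√2 / 2 * (a - b)) ^ 2) ((√2 / 2 * (a + b)) ^ 2) = (a ^ 2 + b ^ 2) / 2 + |a| * |b| := by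
  have hs : (√2 / 2) ^ 2 = 1 / 2 := by rw [div_pow, sq_sqrt zero_le_two]; norm_num
  have hdiff := max_sub_min_eq_abs ((√2 / 2 * (a - b)) ^ 2) ((√2 / 2 * (a + b)) ^ 2)
  have hsum := min_add_max ((√2 / 2 * (a - b)) ^ 2) ((√2 / 2 * (a + b)) ^ 2)
  simp only [mul_pow, hs] at hdiff hsum ⊢
  rw [show 1 / 2 * (a + b) ^ 2 - 1 / 2 * (a - b) ^ 2 = 2 * (a * b) by ring, abs_mul, abs_mul,
    abs_two] at hdiff
  linarith

lemma integral_max_sq_mul_stdGauss2 :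
    ∫ y : ℝ², max (y 0 ^ 2) (y 1 ^ 2) * stdGauss2 y = 1 + 2 / π := by
  have hsq (i : Fin 2) := integrable_apply_mul_stdGauss2 i
    (integrable_sq_mul_gaussianPDFReal one_ne_zero)
  have habs := integrable_abs_mul_gaussianPDFReal one_ne_zero
  calc ∫ y : ℝ², max (y 0 ^ 2) (y 1 ^ 2) * stdGauss2 y
      = ∫ y : ℝ², max (rotQuarterPi y 0 ^ 2) (rotQuarterPi y 1 ^ 2) * stdGauss2 y :=
        (integral_comp_linearIsometryEquiv_mul_stdGauss2 rotQuarterPi _).symm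
    _ = ∫ y : ℝ², (1 / 2 * (y 0 ^ 2 * stdGauss2 y) + 1 / 2 * (y 1 ^ 2 * stdGauss2 y)) +
          |y 0| * |y 1| * stdGauss2 y := by
        congr 1 with y
        rw [(rotQuarterPi_apply y).1, (rotQuarterPi_apply y).2, max_sq_rotQuarterPi]
        ring
    _ = 1 / 2 * (∫ y : ℝ², y 0 ^ 2 * stdGauss2 y) + 1 / 2 * (∫ y : ℝ², y 1 ^ 2 * stdGauss2 y) +
          ∫ y : ℝ², |y 0| * |y 1| * stdGauss2 y := by
        rw [integral_add ?_ (integrable_mul_stdGauss2 habs habs),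
          integral_add ((hsq 0).const_mul _) ((hsq 1).const_mul _), integral_const_mul,
          integral_const_mul]
        exact ((hsq 0).const_mul _).add ((hsq 1).const_mul _)
    _ = 1 / 2 * 1 + 1 / 2 * 1 + √(2 / π) ^ 2 := by
        rw [integral_apply_mul_stdGauss2 0 (· ^ 2), integral_apply_mul_stdGauss2 1 (· ^ 2),
          integral_mul_stdGauss2, integral_sq_mul_gaussianPDFReal one_ne_zero,
          integral_abs_mul_gaussianPDFReal one_ne_zero]
        simp only [NNReal.coe_one, mul_one, sq]
    _ = 1 + 2 / π := by
        rw [sq_sqrt (by positivity)]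
        ring

lemma ae_abs_ne_abs : ∀ᵐ y : ℝ², |y 0| ≠ |y 1| := by
  have hline (c : ℝ) : volume {y : ℝ² | y 0 = c * y 1} = 0 := by
    let ℓ : ℝ² →ₗ[ℝ] ℝ := (EuclideanSpace.proj 0 - c • EuclideanSpace.proj 1 : ℝ² →L[ℝ] ℝ)
    have hker : LinearMap.ker ℓ ≠ ⊤ := fun h => by
      simpa [ℓ] using LinearMap.congr_fun (LinearMap.ker_eq_top.1 h) (EuclideanSpace.single 0 1)
    convert Measure.addHaar_submodule volume _ hker using 2
    ext y
    simp [ℓ, sub_eq_zero]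
  refine measure_mono_null (fun y hy => ?_) (measure_union_null (hline 1) (hline (-1)))
  rcases abs_eq_abs.1 (not_not.1 hy) with h | h
  · exact Or.inl (by simp [h])
  · exact Or.inr (by simp [h])

section AxesProjection

variable {pr : ℝ² → ℝ²}

lemma sum_integral_mul_mul_stdGauss2_eq_integral_max
    (hpr0 : ∀ y, pr y 0 = if |y 1| < |y 0| then y 0 else 0)
    (hpr1 : ∀ y, pr y 1 = if |y 0| < |y 1| then y 1 else 0) :
    ∑ i : Fin 2, ∫ y, pr y i * y i * stdGauss2 y = ∫ y, max (y 0 ^ 2) (y 1 ^ 2) * stdGauss2 y := by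
  have hmeas (i j : Fin 2) : MeasurableSet {y : ℝ² | |y i| < |y j|} :=
    measurableSet_lt (by fun_prop) (by fun_prop)
  have hsq (i : Fin 2) := integrable_apply_mul_stdGauss2 i
    (integrable_sq_mul_gaussianPDFReal one_ne_zero)
  calc ∑ i : Fin 2, ∫ y, pr y i * y i * stdGauss2 y
      = (∫ y, {y : ℝ² | |y 1| < |y 0|}.indicator (fun y => y 0 ^ 2 * stdGauss2 y) y) +
          ∫ y, {y : ℝ² | |y 0| < |y 1|}.indicator (fun y => y 1 ^ 2 * stdGauss2 y) y := by
        rw [Fin.sum_univ_two]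
        congr 1 <;> congr 1 with y <;>
          simp only [hpr0, hpr1, Set.indicator_apply, Set.mem_ofPred_eq] <;> split_ifs <;> ring
    _ = ∫ y, max (y 0 ^ 2) (y 1 ^ 2) * stdGauss2 y := by
        rw [← integral_add ((hsq 0).indicator (hmeas 1 0)) ((hsq 1).indicator (hmeas 0 1))]
        refine integral_congr_ae ?_
        filter_upwards [ae_abs_ne_abs] with y hy
        rcases hy.lt_or_gt with h | h
        · simp [h, h.not_gt, max_eq_right (sq_le_sq.2 h.le)]
        · simp [h, h.not_gt, max_eq_left (sq_le_sq.2 h.le)]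

lemma exists_eventuallyEq_proj_smulRight_single
    (hpr0 : ∀ y, pr y 0 = if |y 1| < |y 0| then y 0 else 0)
    (hpr1 : ∀ y, pr y 1 = if |y 0| < |y 1| then y 1 else 0) {y : ℝ²} (hy : |y 0| ≠ |y 1|) :
    ∃ i : Fin 2, pr =ᶠ[𝓝 y] (EuclideanSpace.proj i).smulRight (EuclideanSpace.single i 1) := by
  have hc (i : Fin 2) : Continuous fun z : ℝ² => |z i| := (EuclideanSpace.proj i).continuous.abs
  rcases hy.lt_or_gt with h | h
  · refine ⟨1, ?_⟩
    filter_upwards [(isOpen_lt (hc 0) (hc 1)).mem_nhds h] with z (hz : |z 0| < |z 1|)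
    ext j; fin_cases j <;> simp [hpr0, hpr1, hz, hz.not_gt]
  · refine ⟨0, ?_⟩
    filter_upwards [(isOpen_lt (hc 1) (hc 0)).mem_nhds h] with z (hz : |z 1| < |z 0|)
    ext j; fin_cases j <;> simp [hpr0, hpr1, hz, hz.not_gt]

lemma fderiv_divergence_eq_one
    (hpr0 : ∀ y, pr y 0 = if |y 1| < |y 0| then y 0 else 0)
    (hpr1 : ∀ y, pr y 1 = if |y 0| < |y 1| then y 1 else 0) {y : ℝ²} (hy : |y 0| ≠ |y 1|) :
    fderiv ℝ pr y (EuclideanSpace.single 0 1) 0 +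
      fderiv ℝ pr y (EuclideanSpace.single 1 1) 1 = 1 := by
  obtain ⟨i, hi⟩ := exists_eventuallyEq_proj_smulRight_single hpr0 hpr1 hy
  rw [hi.fderiv_eq, ContinuousLinearMap.fderiv]
  fin_cases i <;> simp

end AxesProjection

/-- **Degrees of freedom for selecting between the two coordinate axes in `ℝ²`.**
Let `Y ~ N(0, I₂)` and let `pr` be the metric projection onto the union `K` of the two
coordinate axes, `pr(y₁, y₂) = (y₁·1{|y₁| > |y₂|}, y₂·1{|y₂| > |y₁|})`. Then
`df = Σᵢ cov(Yᵢ, prᵢ(Y)) = E max{Y₁², Y₂²} = 1 + 2/π`, while the Stein degrees of freedom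
`df_S = E(∇·pr(Y)) = 1`; hence `df - df_S = 2/π > 0`. -/
theorem df_two_axes
    (pr : EuclideanSpace ℝ (Fin 2) → EuclideanSpace ℝ (Fin 2))
    (hpr0 : ∀ y, pr y 0 = if |y 1| < |y 0| then y 0 else 0)
    (hpr1 : ∀ y, pr y 1 = if |y 0| < |y 1| then y 1 else 0) :
    (∑ i : Fin 2, ∫ y, pr y i * y i * stdGauss2 y) =
      (∫ y : EuclideanSpace ℝ (Fin 2), max ((y 0) ^ 2) ((y 1) ^ 2) * stdGauss2 y) ∧
    (∑ i : Fin 2, ∫ y, pr y i * y i * stdGauss2 y) = 1 + 2 / Real.pi ∧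
    (∫ y, (fderiv ℝ pr y (EuclideanSpace.single 0 1) 0 +
        fderiv ℝ pr y (EuclideanSpace.single 1 1) 1) * stdGauss2 y) = 1 ∧
    (0 : ℝ) < 2 / Real.pi := by
  have hdf := sum_integral_mul_mul_stdGauss2_eq_integral_max hpr0 hpr1
  refine ⟨hdf, hdf.trans integral_max_sq_mul_stdGauss2, ?_, by positivity⟩
  calc ∫ y, (fderiv ℝ pr y (EuclideanSpace.single 0 1) 0 +
        fderiv ℝ pr y (EuclideanSpace.single 1 1) 1) * stdGauss2 y
      = ∫ y, stdGauss2 y := by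
        refine integral_congr_ae ?_
        filter_upwards [ae_abs_ne_abs] with y hy
        rw [fderiv_divergence_eq_one hpr0 hpr1 hy, one_mul]
    _ = 1 := integral_stdGauss2
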